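/- The automorphism group of the E8 lattice acts transitively on the set of vectors of norm 2. -/

import Mathlib

/-!
Reflections `x ↦ x - ⟪r, x⟫ r` in the norm-2 vectors `r` of an integral lattice are automorphisms
of it. For two roots the inner product is an integer of absolute value at most 2, so when it is
nonzero the roots are related by at most two reflections: `s_{u - v}` sends `u` to `v` when
`⟪u, v⟫ = 1`, and `s_u` sends `u` to `-u`. In E8 every root `u` has `⟪u, e_i + e_k⟫ = u_i + u_k ≠ 0`
for some `i ≠ k`, and every root `e_i + e_k` has inner product 1 with `(1/2, …, 1/2)`; hence all
roots lie in the orbit of `(1/2, …, 1/2)`.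
-/

noncomputable section

/-- The standard inner product on ℝ⁸. -/
def dot8 (u v : Fin 8 → ℝ) : ℝ := ∑ i, u i * v i

/-- Membership in the E8 lattice: all coordinates integers or all half-odd-integers,
with even coordinate sum. -/
def inE8 (v : Fin 8 → ℝ) : Prop :=
  ((∀ i, ∃ n : ℤ, v i = (n : ℝ)) ∨ (∀ i, ∃ n : ℤ, v i = (n : ℝ) + 1 / 2)) ∧
    ∃ m : ℤ, (∑ i, v i) = 2 * (m : ℝ)

open Matrix MulAction

section IntegralLattice

variable {ι : Type*} [Fintype ι]

def latticeAut (L : AddSubgroup (ι → ℝ)) : Subgroup ((ι → ℝ) ≃ₗ[ℝ] (ι → ℝ)) where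
  carrier := {f | (∀ x y, f x ⬝ᵥ f y = x ⬝ᵥ y) ∧ ∀ x, f x ∈ L ↔ x ∈ L}
  mul_mem' {f g} hf hg := ⟨fun x y => by simp [hf.1, hg.1], fun x => by simp [hf.2, hg.2]⟩
  one_mem' := ⟨fun _ _ => rfl, fun _ => Iff.rfl⟩
  inv_mem' {f} hf := ⟨fun x y => by simpa using (hf.1 (f⁻¹ x) (f⁻¹ y)).symm,
    fun x => by simpa using (hf.2 (f⁻¹ x)).symm⟩

def IsIntegralLattice (L : AddSubgroup (ι → ℝ)) : Prop :=
  ∀ x ∈ L, ∀ y ∈ L, ∃ n : ℤ, x ⬝ᵥ y = n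

lemma dotProduct_sub_self_sub (u v : ι → ℝ) :
    (u - v) ⬝ᵥ (u - v) = u ⬝ᵥ u - 2 * (u ⬝ᵥ v) + v ⬝ᵥ v := by
  simp only [sub_dotProduct, dotProduct_sub, dotProduct_comm v u]
  ring

variable {L : AddSubgroup (ι → ℝ)}

lemma reflection_mem_latticeAut (hL : IsIntegralLattice L) {r : ι → ℝ} (hr : r ∈ L)
    (h : dotProductBilin ℝ ℝ r r = 2) : Module.reflection h ∈ latticeAut L := by
  have maps_to : ∀ x ∈ L, Module.reflection h x ∈ L := by
    intro x hx
    obtain ⟨n, hn⟩ := hL r hr x hx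
    rw [Module.reflection_apply, dotProductBilin_apply_apply, hn, Int.cast_smul_eq_zsmul]
    exact L.sub_mem hx (L.zsmul_mem hr n)
  refine ⟨fun x y => ?_, fun x => ⟨fun hx => ?_, maps_to x⟩⟩
  · simp only [dotProductBilin_apply_apply] at h
    simp only [Module.reflection_apply, dotProductBilin_apply_apply, sub_dotProduct,
      dotProduct_sub, smul_dotProduct, dotProduct_smul, smul_eq_mul, h, dotProduct_comm x r]
    ring
  · simpa [Module.involutive_reflection h x] using maps_to _ hx

lemma sub_smul_mem_orbit_latticeAut (hL : IsIntegralLattice L) {r : ι → ℝ} (hr : r ∈ L)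
    (hr2 : r ⬝ᵥ r = 2) (x : ι → ℝ) : x - (r ⬝ᵥ x) • r ∈ orbit (latticeAut L) x :=
  have h : dotProductBilin ℝ ℝ r r = 2 := hr2
  ⟨⟨_, reflection_mem_latticeAut hL hr h⟩, Module.reflection_apply x h⟩

lemma mem_orbit_latticeAut_of_dotProduct_pos (hL : IsIntegralLattice L) {u v : ι → ℝ}
    (hu : u ∈ L) (hv : v ∈ L) (hu2 : u ⬝ᵥ u = 2) (hv2 : v ⬝ᵥ v = 2) (huv : 0 < u ⬝ᵥ v) :
    v ∈ orbit (latticeAut L) u := by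
  obtain ⟨n, hn⟩ := hL u hu v hv
  have hdiff : (u - v) ⬝ᵥ (u - v) = 4 - 2 * n := by
    rw [dotProduct_sub_self_sub, hu2, hv2, hn]; ring
  have hdiff_nonneg : 0 ≤ (u - v) ⬝ᵥ (u - v) := Finset.sum_nonneg fun i _ => mul_self_nonneg _
  obtain rfl | rfl : n = 1 ∨ n = 2 := by
    have : 0 < n := by exact_mod_cast hn ▸ huv
    have : n ≤ 2 := by exact_mod_cast (by linarith : (n : ℝ) ≤ 2)
    omega
  · have hr2 : (u - v) ⬝ᵥ (u - v) = 2 := by rw [hdiff]; norm_num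
    have hru : (u - v) ⬝ᵥ u = 1 := by
      rw [sub_dotProduct, hu2, dotProduct_comm, hn]; norm_num
    simpa [hru] using sub_smul_mem_orbit_latticeAut hL (L.sub_mem hu hv) hr2 u
  · have : u - v = 0 := dotProduct_self_eq_zero.1 (by rw [hdiff]; norm_num)
    rw [← sub_eq_zero.1 this]
    exact mem_orbit_self u

lemma mem_orbit_latticeAut_of_dotProduct_ne_zero (hL : IsIntegralLattice L) {u v : ι → ℝ}
    (hu : u ∈ L) (hv : v ∈ L) (hu2 : u ⬝ᵥ u = 2) (hv2 : v ⬝ᵥ v = 2) (huv : u ⬝ᵥ v ≠ 0) :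
    v ∈ orbit (latticeAut L) u := by
  rcases huv.lt_or_gt with huv | huv
  · have hneg : -u ∈ orbit (latticeAut L) u := by
      convert sub_smul_mem_orbit_latticeAut hL hu hu2 u using 1
      rw [hu2]; module
    have := mem_orbit_latticeAut_of_dotProduct_pos hL (L.neg_mem hu) hv
      (by rwa [neg_dotProduct_neg]) hv2 (by rwa [neg_dotProduct, neg_pos])
    exact orbit_eq_iff.2 hneg ▸ this
  · exact mem_orbit_latticeAut_of_dotProduct_pos hL hu hv hu2 hv2 huv

lemma exists_ne_add_ne_zero (hι : 2 < Fintype.card ι) {u : ι → ℝ} (hu : u ≠ 0) :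
    ∃ i k, i ≠ k ∧ u i + u k ≠ 0 := by
  classical
  by_contra! h
  refine hu (funext fun j => ?_)
  have : 1 < (Finset.univ.erase j).card := by
    rw [Finset.card_erase_of_mem (Finset.mem_univ j), Finset.card_univ]; omega
  obtain ⟨i, hi, k, hk, hik⟩ := Finset.one_lt_card.1 this
  have := h i k hik
  have := h j i (Finset.ne_of_mem_erase hi).symm
  have := h j k (Finset.ne_of_mem_erase hk).symm
  simp only [Pi.zero_apply]
  linarith

end IntegralLattice

lemma forall_int_or_forall_half_int_iff {ι : Type*} (v : ι → ℝ) :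
    ((∀ i, ∃ n : ℤ, v i = n) ∨ (∀ i, ∃ n : ℤ, v i = n + 1 / 2)) ↔
      ∃ (z : ι → ℤ) (ε : ℤ), ∀ i, v i = z i + ε / 2 := by
  constructor
  · rintro (h | h) <;> choose z hz using h
    · exact ⟨z, 0, by simpa using hz⟩
    · exact ⟨z, 1, by simpa using hz⟩
  · rintro ⟨z, ε, hz⟩
    rcases Int.even_or_odd' ε with ⟨k, rfl | rfl⟩
    · exact Or.inl fun i => ⟨z i + k, by rw [hz]; push_cast; ring⟩
    · exact Or.inr fun i => ⟨z i + k, by rw [hz]; push_cast; ring⟩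

lemma inE8_iff (v : Fin 8 → ℝ) :
    inE8 v ↔ (∃ (z : Fin 8 → ℤ) (ε : ℤ), ∀ i, v i = z i + ε / 2) ∧ ∃ m : ℤ, ∑ i, v i = 2 * m := by
  rw [inE8, forall_int_or_forall_half_int_iff]

lemma dot8_eq_dotProduct (u v : Fin 8 → ℝ) : dot8 u v = u ⬝ᵥ v := rfl

def e8Lattice : AddSubgroup (Fin 8 → ℝ) where
  carrier := {v | inE8 v}
  zero_mem' := (inE8_iff 0).2 ⟨⟨0, 0, by simp⟩, 0, by simp⟩
  add_mem' {x y} hx hy := by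
    obtain ⟨⟨z, ε, hz⟩, m, hm⟩ := (inE8_iff x).1 hx
    obtain ⟨⟨z', ε', hz'⟩, m', hm'⟩ := (inE8_iff y).1 hy
    refine (inE8_iff _).2 ⟨⟨z + z', ε + ε', fun i => ?_⟩, m + m', ?_⟩
    · simp only [Pi.add_apply, hz, hz']; push_cast; ring
    · simp only [Pi.add_apply, Finset.sum_add_distrib, hm, hm']; push_cast; ring
  neg_mem' {x} hx := by
    obtain ⟨⟨z, ε, hz⟩, m, hm⟩ := (inE8_iff x).1 hx
    refine (inE8_iff _).2 ⟨⟨-z, -ε, fun i => ?_⟩, -m, ?_⟩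
    · simp only [Pi.neg_apply, hz]; push_cast; ring
    · simp only [Pi.neg_apply, Finset.sum_neg_distrib, hm]; push_cast; ring

lemma mem_e8Lattice {v : Fin 8 → ℝ} : v ∈ e8Lattice ↔ inE8 v := Iff.rfl

lemma isIntegralLattice_e8Lattice : IsIntegralLattice e8Lattice := by
  intro x hx y hy
  obtain ⟨⟨z, ε, hz⟩, m, hm⟩ := (inE8_iff x).1 hx
  obtain ⟨⟨z', ε', hz'⟩, m', hm'⟩ := (inE8_iff y).1 hy
  have sum_eq : ∀ (w : Fin 8 → ℤ) (δ : ℤ), ∑ i, ((w i : ℝ) + δ / 2) = ∑ i, (w i : ℝ) + 4 * δ := by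
    intro w δ
    rw [Finset.sum_add_distrib, Finset.sum_const, Finset.card_univ, Fintype.card_fin, nsmul_eq_mul]
    ring
  simp only [hz, sum_eq] at hm
  simp only [hz', sum_eq] at hm'
  refine ⟨∑ i, z i * z' i + ε * m' + ε' * m - 2 * ε * ε', ?_⟩
  simp only [dotProduct, hz, hz', add_mul, mul_add, Finset.sum_add_distrib, ← Finset.sum_mul,
    ← Finset.mul_sum, Finset.sum_const, Finset.card_univ, Fintype.card_fin, nsmul_eq_mul]
  push_cast
  linear_combination (ε / 2) * hm' + (ε' / 2) * hm

lemma single_add_single_mem_e8Lattice (i k : Fin 8) :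
    Pi.single i 1 + Pi.single k 1 ∈ e8Lattice := by
  refine (inE8_iff _).2 ⟨⟨Pi.single i 1 + Pi.single k 1, 0, fun j => ?_⟩, 1, ?_⟩
  · simp [Pi.single_apply]
  · norm_num [Finset.sum_add_distrib]

lemma single_add_single_dotProduct_self {i k : Fin 8} (hik : i ≠ k) :
    (Pi.single i 1 + Pi.single k 1 : Fin 8 → ℝ) ⬝ᵥ (Pi.single i 1 + Pi.single k 1) = 2 := by
  norm_num [dotProduct_add, hik, hik.symm]

lemma half_mem_e8Lattice : (fun _ => 1 / 2 : Fin 8 → ℝ) ∈ e8Lattice :=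
  (inE8_iff _).2 ⟨⟨0, 1, by simp⟩, 2, by norm_num⟩

lemma half_dotProduct_self : (fun _ => 1 / 2 : Fin 8 → ℝ) ⬝ᵥ (fun _ => 1 / 2) = 2 := by
  norm_num [dotProduct]

lemma half_mem_orbit_latticeAut_e8Lattice {u : Fin 8 → ℝ} (hu : u ∈ e8Lattice)
    (hu2 : u ⬝ᵥ u = 2) : (fun _ => 1 / 2) ∈ orbit (latticeAut e8Lattice) u := by
  have hL := isIntegralLattice_e8Lattice
  obtain ⟨i, k, hik, hu_ik⟩ := exists_ne_add_ne_zero (u := u) (by simp) (by rintro rfl; simp at hu2)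
  have hw := single_add_single_mem_e8Lattice i k
  have hw2 := single_add_single_dotProduct_self hik
  have h1 : Pi.single i 1 + Pi.single k 1 ∈ orbit (latticeAut e8Lattice) u :=
    mem_orbit_latticeAut_of_dotProduct_ne_zero hL hu hw hu2 hw2 (by simpa [dotProduct_add])
  have h2 := mem_orbit_latticeAut_of_dotProduct_ne_zero hL hw half_mem_e8Lattice hw2
    half_dotProduct_self (by simp [add_dotProduct])
  exact orbit_eq_iff.2 h1 ▸ h2

/-- Aut(E8) acts transitively on the set of vectors of norm 2. -/
theorem e8_aut_transitive_on_roots (u v : Fin 8 → ℝ)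
    (hu : inE8 u) (hv : inE8 v) (hu2 : dot8 u u = 2) (hv2 : dot8 v v = 2) :
    ∃ f : (Fin 8 → ℝ) ≃ₗ[ℝ] (Fin 8 → ℝ),
      (∀ x y, dot8 (f x) (f y) = dot8 x y) ∧
      (∀ x, inE8 (f x) ↔ inE8 x) ∧
      f u = v := by
  simp only [dot8_eq_dotProduct, ← mem_e8Lattice] at *
  have hu' := half_mem_orbit_latticeAut_e8Lattice hu hu2
  have hv' := half_mem_orbit_latticeAut_e8Lattice hv hv2
  obtain ⟨⟨f, hf⟩, rfl⟩ : v ∈ orbit (latticeAut e8Lattice) u :=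
    orbit_eq_iff.2 hu' ▸ mem_orbit_symm.1 hv'
  exact ⟨f, hf.1, hf.2, rfl⟩
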